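/- arXiv:1610.09993 — 3 statements merged into one kernel-verified Lean document; each statement's English description precedes it below -/
import Mathlib

section
/- For any r with 0 ≤ r ≤ n, P(S^n_{r+}) is closed if and only if for every connected component H of G the restricted projection P_H(S^{|H|}_{r+}) is closed, where P_H : S^{|H|} → ℝ^{E_H} is the coordinate projection onto the pairs E_H of E with both endpoints in H. -/
open Matrix

/-- PSD matrices of rank at most `r`, indexed by a finite type. -/
def psdRank (ι : Type) [Fintype ι] [DecidableEq ι] (r : ℕ) : Set (Matrix ι ι ℝ) :=
  {X | X.PosSemidef ∧ X.rank ≤ r}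

/-- Coordinate projection onto the entries indexed by `E`. -/
def proj {n : ℕ} (E : Set (Fin n × Fin n)) (X : Matrix (Fin n) (Fin n) ℝ) : E → ℝ :=
  fun p => X p.1.1 p.1.2

/-- The simple graph underlying the index set `E` (loops discarded). -/
def graphOf {n : ℕ} (E : Set (Fin n × Fin n)) : SimpleGraph (Fin n) where
  Adj i j := i ≠ j ∧ ((i, j) ∈ E ∨ (j, i) ∈ E)
  symm := by
    constructor
    intro i j h
    exact ⟨h.1.symm, h.2.symm⟩
  loopless := by
    constructor
    intro i h
    exact h.1 rfl

/-!
A matrix lies in `S_{r+}` exactly when it is a Gram matrix `B * Bᵀ` with `r` columns. Every pair of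
`E` lies inside one connected component, so the entries seen by `P` only pair rows of `B` from the
same component: Gram factors chosen independently on the components glue to a global one, and the
global image is the intersection of the preimages of the component images under restriction.
Conversely, extending a component factor by zero rows shows that each component image is the
preimage of the global image under extension by zero. Both maps are continuous.
-/

namespace Matrix

variable {R ι κ μ : Type*} [CommSemiring R] [Fintype κ]

theorem submatrix_mul_transpose_submatrix_of_eq_zero {p : κ → Prop} [DecidablePred p]
    (D : Matrix ι κ R) (hD : ∀ i j, ¬ p j → D i j = 0) :
    let D' : Matrix ι {j // p j} R := D.submatrix id Subtype.val
    D' * D'ᵀ = D * Dᵀ := by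
  refine Matrix.ext fun i i' => Fintype.sum_of_injective _ Subtype.val_injective _ _
    (fun j hj => ?_) fun _ => rfl
  exact mul_eq_zero_of_left (hD i j fun hp => hj ⟨⟨j, hp⟩, rfl⟩) _

theorem mul_submatrix_one_mul_transpose [Fintype μ] [DecidableEq μ] (D : Matrix ι κ R)
    (e : κ ↪ μ) :
    D * (1 : Matrix μ μ R).submatrix e id * (D * (1 : Matrix μ μ R).submatrix e id)ᵀ =
      D * Dᵀ := by
  classical
  have : (1 : Matrix μ μ R).submatrix e id * ((1 : Matrix μ μ R).submatrix e id)ᵀ = 1 := by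
    ext k k'
    simp [Matrix.mul_apply, one_apply, e.injective.eq_iff]
  rw [transpose_mul, Matrix.mul_assoc, ← Matrix.mul_assoc _ _ Dᵀ, this, Matrix.one_mul]

end Matrix

theorem Matrix.IsHermitian.eq_mul_transpose_of_eigenvalues_nonneg {ι : Type*} [Fintype ι]
    [DecidableEq ι] {X : Matrix ι ι ℝ} (hX : X.IsHermitian) (h : ∀ i, 0 ≤ hX.eigenvalues i) :
    X = (hX.eigenvectorUnitary : Matrix ι ι ℝ) * diagonal (fun i => √(hX.eigenvalues i)) *
      ((hX.eigenvectorUnitary : Matrix ι ι ℝ) * diagonal (fun i => √(hX.eigenvalues i)))ᵀ := by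
  have hsqrt : (fun i => √(hX.eigenvalues i) * √(hX.eigenvalues i)) = hX.eigenvalues :=
    funext fun i => Real.mul_self_sqrt (h i)
  rw [transpose_mul, diagonal_transpose, Matrix.mul_assoc (hX.eigenvectorUnitary : Matrix ι ι ℝ),
    ← Matrix.mul_assoc (diagonal _) (diagonal _), diagonal_mul_diagonal, hsqrt]
  conv_lhs => rw [hX.spectral_theorem, Unitary.conjStarAlgAut_apply]
  simp [star_eq_conjTranspose, Matrix.mul_assoc]

theorem Matrix.PosSemidef.exists_eq_mul_transpose_of_rank_le {ι : Type*} [Fintype ι]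
    [DecidableEq ι] {X : Matrix ι ι ℝ} (hX : X.PosSemidef) {r : ℕ} (hr : X.rank ≤ r) :
    ∃ B : Matrix ι (Fin r) ℝ, X = B * Bᵀ := by
  let D := (hX.1.eigenvectorUnitary : Matrix ι ι ℝ) * diagonal (fun i => √(hX.1.eigenvalues i))
  have hD : ∀ i j, ¬ hX.1.eigenvalues j ≠ 0 → D i j = 0 := fun i j hj => by
    simp [D, mul_diagonal, not_not.mp hj]
  obtain ⟨e⟩ : Nonempty ({j // hX.1.eigenvalues j ≠ 0} ↪ Fin r) :=
    Function.Embedding.nonempty_of_card_le <| by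
      simpa [← hX.1.rank_eq_card_non_zero_eigs] using hr
  refine ⟨(D.submatrix id Subtype.val : Matrix ι {j // hX.1.eigenvalues j ≠ 0} ℝ) *
    (1 : Matrix (Fin r) (Fin r) ℝ).submatrix e id, ?_⟩
  rw [mul_submatrix_one_mul_transpose, submatrix_mul_transpose_submatrix_of_eq_zero _ hD]
  exact hX.1.eq_mul_transpose_of_eigenvalues_nonneg hX.eigenvalues_nonneg

theorem mem_psdRank_iff_exists_eq_mul_transpose {ι : Type} [Fintype ι] [DecidableEq ι] {r : ℕ}
    {X : Matrix ι ι ℝ} : X ∈ psdRank ι r ↔ ∃ B : Matrix ι (Fin r) ℝ, X = B * Bᵀ := by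
  refine ⟨fun ⟨hX, hr⟩ => hX.exists_eq_mul_transpose_of_rank_le hr, ?_⟩
  rintro ⟨B, rfl⟩
  refine ⟨by simpa using posSemidef_self_mul_conjTranspose B, ?_⟩
  rw [rank_self_mul_transpose]
  exact B.rank_le_card_width.trans_eq (Fintype.card_fin r)

theorem submatrix_mem_psdRank {ι κ : Type} [Fintype ι] [DecidableEq ι] [Fintype κ]
    [DecidableEq κ] {r : ℕ} {X : Matrix ι ι ℝ} (hX : X ∈ psdRank ι r) (f : κ → ι) :
    X.submatrix f f ∈ psdRank κ r :=
  ⟨hX.1.submatrix f, (rank_submatrix_le _ _ _).trans hX.2⟩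

section Restriction

variable {ι : Type} (E : Set (ι × ι)) (p : ι → Prop)

abbrev edgesWithin : Type := {e : ι × ι // e ∈ E ∧ p e.1 ∧ p e.2}

-- `proj` over an arbitrary index type; `localProj E p` is the paper's `P_H` for `H = {u | p u}`.
def entryProj (X : Matrix ι ι ℝ) : E → ℝ := fun e => X e.1.1 e.1.2

def localProj (Y : Matrix {u // p u} {u // p u} ℝ) : edgesWithin E p → ℝ :=
  fun q => Y ⟨q.1.1, q.2.2.1⟩ ⟨q.1.2, q.2.2.2⟩

def restrictEntries (f : E → ℝ) : edgesWithin E p → ℝ :=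
  fun q => f ⟨q.1, q.2.1⟩

def extendEntriesByZero [DecidablePred p] (g : edgesWithin E p → ℝ) : E → ℝ :=
  fun e => if h : p e.1.1 ∧ p e.1.2 then g ⟨e.1, e.2, h⟩ else 0

theorem continuous_restrictEntries : Continuous (restrictEntries E p) :=
  continuous_pi fun _ => continuous_apply _

theorem continuous_extendEntriesByZero [DecidablePred p] :
    Continuous (extendEntriesByZero E p) := by
  refine continuous_pi fun e => ?_
  by_cases h : p e.1.1 ∧ p e.1.2
  · simpa only [extendEntriesByZero, dif_pos h] using continuous_apply _
  · simpa only [extendEntriesByZero, dif_neg h] using continuous_const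

theorem restrictEntries_extendEntriesByZero [DecidablePred p] (g : edgesWithin E p → ℝ) :
    restrictEntries E p (extendEntriesByZero E p g) = g :=
  funext fun q => dif_pos q.2.2

variable [Fintype ι] [DecidableEq ι] [DecidablePred p] {E p} {r : ℕ}

theorem restrictEntries_mem_localProj_image {f : E → ℝ} (hf : f ∈ entryProj E '' psdRank ι r) :
    restrictEntries E p f ∈ localProj E p '' psdRank {u // p u} r := by
  obtain ⟨X, hX, rfl⟩ := hf
  exact ⟨X.submatrix Subtype.val Subtype.val, submatrix_mem_psdRank hX _, rfl⟩

theorem extendEntriesByZero_mem_entryProj_image (hE : ∀ e ∈ E, (p e.1 ↔ p e.2))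
    {g : edgesWithin E p → ℝ}
    (hg : g ∈ localProj E p '' psdRank {u // p u} r) :
    extendEntriesByZero E p g ∈ entryProj E '' psdRank ι r := by
  obtain ⟨_, hY, rfl⟩ := hg
  obtain ⟨C, rfl⟩ := mem_psdRank_iff_exists_eq_mul_transpose.mp hY
  let B : Matrix ι (Fin r) ℝ := fun i => if h : p i then C ⟨i, h⟩ else 0
  have hB : ∀ i (hi : p i), B i = C ⟨i, hi⟩ := fun i hi => dif_pos hi
  have hB₀ : ∀ i, ¬ p i → B i = 0 := fun i hi => dif_neg hi
  refine ⟨B * Bᵀ, mem_psdRank_iff_exists_eq_mul_transpose.mpr ⟨B, rfl⟩, funext fun e => ?_⟩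
  by_cases h : p e.1.1 ∧ p e.1.2
  · simp only [entryProj, extendEntriesByZero, localProj, dif_pos h, Matrix.mul_apply,
      transpose_apply, hB _ h.1, hB _ h.2]
  · have h₁ : ¬ p e.1.1 := fun h₁ => h ⟨h₁, (hE e.1 e.2).mp h₁⟩
    simp only [entryProj, extendEntriesByZero, dif_neg h, Matrix.mul_apply, hB₀ _ h₁,
      Pi.zero_apply, zero_mul, Finset.sum_const_zero]

theorem localProj_image_eq_preimage (hE : ∀ e ∈ E, (p e.1 ↔ p e.2)) :
    localProj E p '' psdRank {u // p u} r =
      extendEntriesByZero E p ⁻¹' (entryProj E '' psdRank ι r) := by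
  refine Set.ext fun g => ⟨extendEntriesByZero_mem_entryProj_image hE, fun hg => ?_⟩
  simpa only [restrictEntries_extendEntriesByZero] using
    restrictEntries_mem_localProj_image (p := p) hg

theorem isClosed_localProj_image (hE : ∀ e ∈ E, (p e.1 ↔ p e.2))
    (h : IsClosed (entryProj E '' psdRank ι r)) :
    IsClosed (localProj E p '' psdRank {u // p u} r) := by
  rw [localProj_image_eq_preimage hE]
  exact h.preimage (continuous_extendEntriesByZero E p)

end Restriction

section Gluing

variable {ι κ : Type} [Fintype ι] [DecidableEq ι] {E : Set (ι × ι)} {r : ℕ}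
  (p : κ → ι → Prop) [∀ k, DecidablePred (p k)] (c : ι → κ)

theorem mem_entryProj_image_of_forall (hc : ∀ i, p (c i) i) (hE : ∀ e ∈ E, c e.1 = c e.2)
    {f : E → ℝ}
    (hf : ∀ k, restrictEntries E (p k) f ∈ localProj E (p k) '' psdRank {u // p k u} r) :
    f ∈ entryProj E '' psdRank ι r := by
  choose Y hY hYf using hf
  choose C hC using fun k => mem_psdRank_iff_exists_eq_mul_transpose.mp (hY k)
  let B : Matrix ι (Fin r) ℝ := fun i => C (c i) ⟨i, hc i⟩
  have hB : ∀ k i (hi : p k i), c i = k → B i = C k ⟨i, hi⟩ := by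
    rintro k i hi rfl
    rfl
  refine ⟨B * Bᵀ, mem_psdRank_iff_exists_eq_mul_transpose.mpr ⟨B, rfl⟩, funext fun e => ?_⟩
  have h₂ : p (c e.1.1) e.1.2 := hE e.1 e.2 ▸ hc e.1.2
  calc (B * Bᵀ) e.1.1 e.1.2
      = (C (c e.1.1) * (C (c e.1.1))ᵀ) ⟨e.1.1, hc e.1.1⟩ ⟨e.1.2, h₂⟩ := by
        simp only [Matrix.mul_apply, transpose_apply, hB _ e.1.1 (hc _) rfl,
          hB _ e.1.2 h₂ (hE e.1 e.2).symm]
    _ = f e := by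
        rw [← hC]
        exact congrFun (hYf (c e.1.1)) ⟨e.1, e.2, hc e.1.1, h₂⟩

theorem entryProj_image_eq_iInter (hc : ∀ i, p (c i) i) (hE : ∀ e ∈ E, c e.1 = c e.2) :
    entryProj E '' psdRank ι r =
      ⋂ k, restrictEntries E (p k) ⁻¹' (localProj E (p k) '' psdRank {u // p k u} r) := by
  refine Set.ext fun f => ⟨fun hf => Set.mem_iInter.mpr fun k => ?_, fun hf => ?_⟩
  · exact restrictEntries_mem_localProj_image hf
  · exact mem_entryProj_image_of_forall p c hc hE (Set.mem_iInter.mp hf)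

theorem isClosed_entryProj_image (hc : ∀ i, p (c i) i) (hE : ∀ e ∈ E, c e.1 = c e.2)
    (h : ∀ k, IsClosed (localProj E (p k) '' psdRank {u // p k u} r)) :
    IsClosed (entryProj E '' psdRank ι r) := by
  rw [entryProj_image_eq_iInter p c hc hE]
  exact isClosed_iInter fun k => (h k).preimage (continuous_restrictEntries E (p k))

end Gluing

theorem reachable_graphOf_of_mem {n : ℕ} {E : Set (Fin n × Fin n)} {e : Fin n × Fin n}
    (he : e ∈ E) : (graphOf E).Reachable e.1 e.2 := by
  by_cases h : e.1 = e.2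
  · rw [h]
  · exact SimpleGraph.Adj.reachable ⟨h, Or.inl he⟩

open scoped Classical

theorem stmt5_general (n : ℕ) (E : Set (Fin n × Fin n)) (r : ℕ) :
    IsClosed (proj E '' psdRank (Fin n) r) ↔
      ∀ v : Fin n,
        IsClosed ((fun X : Matrix {u : Fin n // (graphOf E).Reachable u v}
              {u : Fin n // (graphOf E).Reachable u v} ℝ =>
            fun q : {e : Fin n × Fin n //
                e ∈ E ∧ (graphOf E).Reachable e.1 v ∧ (graphOf E).Reachable e.2 v} =>
              X ⟨q.1.1, q.2.2.1⟩ ⟨q.1.2, q.2.2.2⟩) ''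
          psdRank {u : Fin n // (graphOf E).Reachable u v} r) := by
  let G := graphOf E
  have hE : ∀ e ∈ E, G.Reachable e.1 e.2 := fun _ => reachable_graphOf_of_mem
  constructor
  · intro h v
    exact isClosed_localProj_image (p := fun u => G.Reachable u v)
      (fun e he => ⟨fun h₁ => (hE e he).symm.trans h₁, fun h₂ => (hE e he).trans h₂⟩) h
  · intro h
    let c : Fin n → Fin n := fun i => (G.connectedComponentMk i).out
    exact isClosed_entryProj_image (fun v u => G.Reachable u v) c
      (fun i => (SimpleGraph.ConnectedComponent.exact (G.connectedComponentMk i).out_eq).symm)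
      (fun e he => congrArg Quot.out (SimpleGraph.ConnectedComponent.sound (hE e he))) h

/-- For any `r ≤ n`, `P(Sⁿᵣ₊)` is closed if and only if for
every connected component `H` of `G` (here: the component of each vertex `v`,
i.e. the vertices reachable from `v`) the restricted projection
`P_H(S^{|H|}ᵣ₊)` is closed. -/
theorem stmt5 (n : ℕ) (hn : 2 ≤ n) (E : Set (Fin n × Fin n))
    (hup : ∀ p ∈ E, p.1 ≤ p.2) (r : ℕ) (hr : r ≤ n) :
    IsClosed (proj E '' psdRank (Fin n) r) ↔
      ∀ v : Fin n,
        IsClosed ((fun X : Matrix {u : Fin n // (graphOf E).Reachable u v}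
              {u : Fin n // (graphOf E).Reachable u v} ℝ =>
            fun q : {e : Fin n × Fin n //
                e ∈ E ∧ (graphOf E).Reachable e.1 v ∧ (graphOf E).Reachable e.2 v} =>
              X ⟨q.1.1, q.2.2.1⟩ ⟨q.1.2, q.2.2.2⟩) ''
          psdRank {u : Fin n // (graphOf E).Reachable u v} r) :=
  stmt5_general n E r
end

section
/- Suppose G has no loops and contains a path of length 3 that does not close into a 4-cycle: there are distinct vertices v1, v2, v3, v4 with v1v2 ∈ E, v2v3 ∈ E, v3v4 ∈ E and v1v4 ∉ E. Then P(S^n_{1+}) is not closed. -/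
/-!
Take `x = t⁻¹ (e₁ + e₄) + t (e₂ + e₃)`. Since neither `v₁v₄` nor a loop is in `E`, the projection
of `x xᵀ` has no entries of order `t⁻²`: it equals `1` on the edges between `{v₁, v₄}` and
`{v₂, v₃}` and `t²` on `v₂v₃`. As `t → 0` these points converge to a point where the edges
`v₁v₂, v₃v₄` carry `1` and `v₂v₃` carries `0`. A PSD matrix with these entries has nonzero diagonal
entries at `v₂` and `v₃` (a zero diagonal entry of a PSD matrix kills its whole column), so its
principal `{v₂, v₃}` submatrix is an invertible diagonal matrix and its rank is at least `2`.
-/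

open Matrix

open scoped ComplexOrder

namespace Matrix

variable {m 𝕜 : Type*} [RCLike 𝕜] [Fintype m]

theorem PosSemidef.apply_eq_zero_of_diag_eq_zero {A : Matrix m m 𝕜}
    (hA : A.PosSemidef) {i j : m} (hj : A j j = 0) : A i j = 0 := by
  classical
  have hcol : A *ᵥ Pi.single j 1 = 0 :=
    (hA.dotProduct_mulVec_zero_iff _).mp (by simpa [mulVec_single, dotProduct_single] using hj)
  simpa [mulVec_single] using congrFun hcol i

theorem two_le_rank_of_diag_ne_zero {K : Type*} [Field K] {A : Matrix m m K} {i j : m}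
    (hij : A i j = 0) (hji : A j i = 0) (hi : A i i ≠ 0) (hj : A j j ≠ 0) : 2 ≤ A.rank := by
  classical
  have hsub : A.submatrix ![i, j] ![i, j] = diagonal ![A i i, A j j] := by
    ext k l; fin_cases k <;> fin_cases l <;> simp [hij, hji]
  calc 2 = (diagonal ![A i i, A j j]).rank := by
        have hne : ∀ k, ![A i i, A j j] k ≠ 0 := by simp [Fin.forall_fin_two, hi, hj]
        simp [rank_diagonal, Fintype.card_subtype, hne]
    _ ≤ A.rank := hsub ▸ rank_submatrix_le A _ _

theorem PosSemidef.two_le_rank_of_path {A : Matrix m m 𝕜} (hA : A.PosSemidef) {a b c d : m}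
    (hab : A a b ≠ 0) (hbc : A b c = 0) (hcd : A c d ≠ 0) : 2 ≤ A.rank := by
  have hcb : A c b = 0 := by rw [← hA.isHermitian.apply, hbc, star_zero]
  have hdc : A d c ≠ 0 := by rwa [← hA.isHermitian.apply, star_ne_zero]
  exact two_le_rank_of_diag_ne_zero hbc hcb
    (fun h => hab (hA.apply_eq_zero_of_diag_eq_zero h))
    (fun h => hdc (hA.apply_eq_zero_of_diag_eq_zero h))

end Matrix

section Projection

open Filter Topology

variable {n : ℕ} (E : Set (Fin n × Fin n))

theorem proj_add (X Y : Matrix (Fin n) (Fin n) ℝ) : proj E (X + Y) = proj E X + proj E Y := rfl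

theorem proj_smul (c : ℝ) (X : Matrix (Fin n) (Fin n) ℝ) : proj E (c • X) = c • proj E X := rfl

theorem apply_eq_of_proj_eq {X Y : Matrix (Fin n) (Fin n) ℝ} (hX : X.IsSymm) (hY : Y.IsSymm)
    (h : proj E X = proj E Y) {a b : Fin n} (hab : (a, b) ∈ E ∨ (b, a) ∈ E) : X a b = Y a b := by
  rcases hab with hab | hba
  · exact congrFun h ⟨_, hab⟩
  · rw [← hX.apply, ← hY.apply]
    exact congrFun h ⟨_, hba⟩

theorem proj_vecMulVec_self_eq_zero {u : Fin n → ℝ} (h : ∀ p ∈ E, u p.1 = 0 ∨ u p.2 = 0) :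
    proj E (vecMulVec u u) = 0 :=
  funext fun p => mul_eq_zero.mpr (h p.1 p.2)

theorem vecMulVec_self_mem_psdRank_one (x : Fin n → ℝ) :
    vecMulVec x x ∈ psdRank (Fin n) 1 :=
  ⟨by simpa using posSemidef_vecMulVec_self_star x, rank_vecMulVec_le x x⟩

theorem proj_vecMulVec_add_vecMulVec_mem_closure {u w : Fin n → ℝ}
    (hu : proj E (vecMulVec u u) = 0) :
    proj E (vecMulVec u w + vecMulVec w u) ∈ closure (proj E '' psdRank (Fin n) 1) := by
  set N := proj E (vecMulVec u w + vecMulVec w u)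
  have hexpand : ∀ t : ℝ, t ≠ 0 → proj E (vecMulVec (t⁻¹ • u + t • w) (t⁻¹ • u + t • w)) =
      N + t ^ 2 • proj E (vecMulVec w w) := by
    intro t ht
    simp only [N, add_vecMulVec, vecMulVec_add, smul_vecMulVec, vecMulVec_smul, proj_add,
      proj_smul, hu, smul_zero, zero_add, smul_add, smul_smul, inv_mul_cancel₀ ht,
      mul_inv_cancel₀ ht, one_smul, sq]
    abel
  have hlim : Tendsto (fun t : ℝ => N + t ^ 2 • proj E (vecMulVec w w)) (𝓝[≠] 0) (𝓝 N) := by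
    have : Continuous (fun t : ℝ => N + t ^ 2 • proj E (vecMulVec w w)) := by fun_prop
    simpa using (this.tendsto 0).mono_left nhdsWithin_le_nhds
  refine mem_closure_of_tendsto hlim ?_
  filter_upwards [self_mem_nhdsWithin] with t ht
  exact ⟨_, vecMulVec_self_mem_psdRank_one _, hexpand t ht⟩

end Projection

theorem stmt9_general (n : ℕ) (E : Set (Fin n × Fin n))
    (hloop : ∀ v : Fin n, (v, v) ∉ E)
    (v1 v2 v3 v4 : Fin n)
    (h12 : v1 ≠ v2) (h13 : v1 ≠ v3) (h14 : v1 ≠ v4)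
    (h23 : v2 ≠ v3) (h24 : v2 ≠ v4) (h34 : v3 ≠ v4)
    (e1 : (v1, v2) ∈ E ∨ (v2, v1) ∈ E)
    (e2 : (v2, v3) ∈ E ∨ (v3, v2) ∈ E)
    (e3 : (v3, v4) ∈ E ∨ (v4, v3) ∈ E)
    (e4 : (v1, v4) ∉ E ∧ (v4, v1) ∉ E) :
    ¬ IsClosed (proj E '' psdRank (Fin n) 1) := by
  intro hclosed
  set u : Fin n → ℝ := Pi.single v1 1 + Pi.single v4 1
  set w : Fin n → ℝ := Pi.single v2 1 + Pi.single v3 1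
  have hu : ∀ v, u v ≠ 0 → v = v1 ∨ v = v4 := fun v hv => by
    by_contra! h
    simp [u, h.1, h.2] at hv
  have huu : proj E (vecMulVec u u) = 0 := by
    refine proj_vecMulVec_self_eq_zero E fun ⟨a, b⟩ hab => ?_
    by_contra! h
    rcases hu a h.1 with rfl | rfl <;> rcases hu b h.2 with rfl | rfl
    exacts [hloop _ hab, e4.1 hab, e4.2 hab, hloop _ hab]
  obtain ⟨X, ⟨hX, hrank⟩, hXN⟩ :=
    hclosed.closure_subset (proj_vecMulVec_add_vecMulVec_mem_closure E (w := w) huu)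
  have hN : (vecMulVec u w + vecMulVec w u).IsSymm := by
    simp only [IsSymm, transpose_add, transpose_vecMulVec, add_comm]
  have hXsymm : X.IsSymm := by simpa [IsSymm] using hX.isHermitian
  have h1 := apply_eq_of_proj_eq E hXsymm hN hXN e1
  have h2 := apply_eq_of_proj_eq E hXsymm hN hXN e2
  have h3 := apply_eq_of_proj_eq E hXsymm hN hXN e3
  simp only [u, w, Matrix.add_apply, vecMulVec_apply, Pi.add_apply, Pi.single_eq_same, ne_eq,
    not_false_eq_true, Pi.single_eq_of_ne, h12, h13, h14, h23, h24, h34, h12.symm, h13.symm,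
    h14.symm, h23.symm, h24.symm, h34.symm, mul_one, mul_zero, add_zero, zero_add] at h1 h2 h3
  have := hX.two_le_rank_of_path (h1 ▸ one_ne_zero) h2 (h3 ▸ one_ne_zero)
  omega

/-- If `G` has no loops and contains a path of length 3 that
does not close into a 4-cycle, then `P(Sⁿ₁₊)` is not closed. -/
theorem stmt9 (n : ℕ) (hn : 2 ≤ n) (E : Set (Fin n × Fin n))
    (hup : ∀ p ∈ E, p.1 ≤ p.2)
    (hloop : ∀ v : Fin n, (v, v) ∉ E)
    (v1 v2 v3 v4 : Fin n)
    (h12 : v1 ≠ v2) (h13 : v1 ≠ v3) (h14 : v1 ≠ v4)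
    (h23 : v2 ≠ v3) (h24 : v2 ≠ v4) (h34 : v3 ≠ v4)
    (e1 : (v1, v2) ∈ E ∨ (v2, v1) ∈ E)
    (e2 : (v2, v3) ∈ E ∨ (v3, v2) ∈ E)
    (e3 : (v3, v4) ∈ E ∨ (v4, v3) ∈ E)
    (e4 : (v1, v4) ∉ E ∧ (v4, v1) ∉ E) :
    ¬ IsClosed (proj E '' psdRank (Fin n) 1) :=
  stmt9_general n E hloop v1 v2 v3 v4 h12 h13 h14 h23 h24 h34 e1 e2 e3 e4
end

section
/- Let G be a connected loopless graph on n ≥ 2 vertices. If P(S^n_{1+}) is closed, then G is a complete bipartite graph. -/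
/-!
If the outer products `x(t) x(t)ᵀ` converge on the entries indexed by `E`, closedness of
`P(Sⁿ₁₊)` realizes the limit by a PSD matrix of rank at most one, all of whose `2 × 2` minors
vanish. Scaling the coordinates of an independent
set `S` by `t` and all other coordinates by `t⁻¹` (as `t → ∞`) produces the pattern that is `1` on
the edges leaving `S` and `0` on the edges avoiding `S`. A single vanishing minor then rules out
triangles (take `S` a vertex) and forces every path `a - b - c - d` with `a ≠ d` to close up to
the edge `ad` (take `S = {a, d}`). A connected graph with these two properties is complete
bipartite, the parts being the neighbourhood of a vertex and its complement.
-/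

open Matrix

namespace Matrix

theorem exists_eq_vecMulVec_of_rank_le_one {m n K : Type*} [Fintype n] [Field K]
    {A : Matrix m n K} (hA : A.rank ≤ 1) : ∃ (u : m → K) (w : n → K), A = vecMulVec u w := by
  classical
  obtain ⟨u, hu⟩ := ((Submodule.finrank_le_one_iff_isPrincipal _).mp hA).principal
  have hcol : ∀ j, ∃ c : K, c • u = A.mulVec (Pi.single j 1) := fun j =>
    Submodule.mem_span_singleton.mp (hu ▸ LinearMap.mem_range_self A.mulVecLin _)
  choose w hw using hcol
  refine ⟨u, w, ext fun i j => ?_⟩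
  have h := congrFun (hw j) i
  rw [mulVec_single_one, Pi.smul_apply, smul_eq_mul] at h
  rw [vecMulVec_apply, mul_comm, h, col_apply]

theorem mul_mul_eq_of_rank_le_one {m n K : Type*} [Fintype n] [Field K]
    {A : Matrix m n K} (hA : A.rank ≤ 1) (a c : m) (b d : n) :
    A a b * A c d = A a d * A c b := by
  obtain ⟨u, w, rfl⟩ := exists_eq_vecMulVec_of_rank_le_one hA
  simp only [vecMulVec_apply]
  ring

end Matrix

theorem vecMulVec_self_mem_psdRank_one_s11 {ι : Type} [Fintype ι] [DecidableEq ι] (v : ι → ℝ) :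
    vecMulVec v v ∈ psdRank ι 1 :=
  ⟨by simpa using posSemidef_vecMulVec_self_star v, rank_vecMulVec_le v v⟩

section ClosedProjection

variable {n : ℕ} {E : Set (Fin n × Fin n)}

theorem graphOf_adj_iff (hloop : ∀ v : Fin n, (v, v) ∉ E) (i j : Fin n) :
    (graphOf E).Adj i j ↔ (i, j) ∈ E ∨ (j, i) ∈ E :=
  ⟨And.right, fun h => ⟨by rintro rfl; exact h.elim (hloop i) (hloop i), h⟩⟩

theorem exists_mem_psdRank_one_eq_on_adj (hclosed : IsClosed (proj E '' psdRank (Fin n) 1))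
    (S : Finset (Fin n)) (hS : ∀ p ∈ E, p.1 ∈ S → p.2 ∉ S) :
    ∃ X ∈ psdRank (Fin n) 1,
      ∀ i j, (graphOf E).Adj i j → X i j = if i ∈ S ↔ j ∈ S then 0 else 1 := by
  set x : ℝ → Fin n → ℝ := fun t v => if v ∈ S then t else t⁻¹
  set y : E → ℝ := fun p => if p.1.1 ∈ S ↔ p.1.2 ∈ S then 0 else 1
  have hlim : Filter.Tendsto (fun t => proj E (vecMulVec (x t) (x t))) Filter.atTop (nhds y) := by
    refine tendsto_pi_nhds.mpr fun ⟨⟨i, j⟩, hij⟩ => ?_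
    have hcancel : ∀ᶠ t : ℝ in Filter.atTop, (1 : ℝ) = t * t⁻¹ ∧ (1 : ℝ) = t⁻¹ * t :=
      (Filter.eventually_ne_atTop 0).mono fun t ht =>
        ⟨(mul_inv_cancel₀ ht).symm, (inv_mul_cancel₀ ht).symm⟩
    by_cases hi : i ∈ S <;> by_cases hj : j ∈ S <;>
      simp only [proj, vecMulVec_apply, x, y, hi, hj, if_true, if_false, iff_self, iff_false,
        false_iff, not_true]
    · exact absurd hj (hS _ hij hi)
    · exact tendsto_const_nhds.congr' (hcancel.mono fun t ht => ht.1)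
    · exact tendsto_const_nhds.congr' (hcancel.mono fun t ht => ht.2)
    · simpa using (tendsto_inv_atTop_zero (𝕜 := ℝ)).mul tendsto_inv_atTop_zero
  obtain ⟨X, hX, hXy⟩ := hclosed.mem_of_tendsto hlim
    (Filter.Eventually.of_forall fun t => ⟨_, vecMulVec_self_mem_psdRank_one_s11 (x t), rfl⟩)
  refine ⟨X, hX, fun i j hij => ?_⟩
  rcases hij.2 with h | h
  · exact congrFun hXy ⟨(i, j), h⟩
  · rw [← hX.1.1.apply i j, star_trivial]
    exact (congrFun hXy ⟨(j, i), h⟩).trans (by simp only [y, iff_comm])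

theorem graphOf_cliqueFree_three (hloop : ∀ v : Fin n, (v, v) ∉ E)
    (hclosed : IsClosed (proj E '' psdRank (Fin n) 1)) : (graphOf E).CliqueFree 3 := by
  intro s hs
  obtain ⟨a, b, c, hab, hac, hbc, -⟩ := SimpleGraph.is3Clique_iff.mp hs
  obtain ⟨X, hX, hXadj⟩ := exists_mem_psdRank_one_eq_on_adj hclosed {a} fun ⟨_, _⟩ hp h1 h2 => by
    simp only [Finset.mem_singleton] at h1 h2
    subst h1 h2
    exact hloop _ hp
  have hminor := mul_mul_eq_of_rank_le_one hX.2 b a c a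
  rw [hXadj b a hab.symm, hXadj a c hac, hXadj b c hbc] at hminor
  simp [hab.ne.symm, hac.ne.symm] at hminor

theorem graphOf_adj_of_adj_of_adj_of_adj (hloop : ∀ v : Fin n, (v, v) ∉ E)
    (hclosed : IsClosed (proj E '' psdRank (Fin n) 1)) {a b c d : Fin n}
    (hab : (graphOf E).Adj a b) (hbc : (graphOf E).Adj b c) (hcd : (graphOf E).Adj c d)
    (had : a ≠ d) :
    (graphOf E).Adj a d := by
  by_cases hac : a = c
  · exact hac ▸ hcd
  by_cases hbd : b = d
  · exact hbd ▸ hab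
  by_contra hnad
  obtain ⟨X, hX, hXadj⟩ :=
      exists_mem_psdRank_one_eq_on_adj hclosed {a, d} fun ⟨_, _⟩ hp h1 h2 => by
    simp only [Finset.mem_insert, Finset.mem_singleton] at h1 h2
    rcases h1 with rfl | rfl <;> rcases h2 with rfl | rfl
    · exact hloop _ hp
    · exact hnad ⟨had, .inl hp⟩
    · exact hnad ⟨had, .inr hp⟩
    · exact hloop _ hp
  have hminor := mul_mul_eq_of_rank_le_one hX.2 a c b d
  rw [hXadj a b hab, hXadj c d hcd, hXadj c b hbc.symm] at hminor
  simp [hab.ne.symm, hbd, Ne.symm hac, hcd.ne] at hminor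

end ClosedProjection

namespace SimpleGraph

theorem Preconnected.adj_iff_of_cliqueFree_three {V : Type*} {G : SimpleGraph V}
    (hG : G.Preconnected) (h3 : G.CliqueFree 3)
    (hclose : ∀ ⦃a b c d⦄, G.Adj a b → G.Adj b c → G.Adj c d → a ≠ d → G.Adj a d)
    {r s : V} (hrs : G.Adj r s) (i j : V) : G.Adj i j ↔ (G.Adj r i ↔ ¬G.Adj r j) := by
  classical
  have htri : ∀ ⦃a b c⦄, G.Adj a b → G.Adj a c → G.Adj b c → False := fun a b c hab hac hbc =>
    h3 {a, b, c} (is3Clique_triple_iff.mpr ⟨hab, hac, hbc⟩)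
  -- A vertex off the neighbourhood of `r` is joined to all of it; this spreads along edges.
  have hdom : ∀ v, G.Adj r v ∨ ∀ w, G.Adj r w → G.Adj v w := by
    intro v
    induction (reachable_iff_reflTransGen r v).mp (hG r v) with
    | refl => exact .inr fun _ => id
    | @tail a c _ hac ih =>
      by_cases hrc : G.Adj r c
      · exact .inl hrc
      refine .inr fun w hrw => ?_
      rcases ih with hra | hdom
      · exact hclose hac.symm hra.symm hrw fun hcw => hrc (hcw ▸ hrw)
      · refine (hrc (hclose hac.symm (hdom w hrw) hrw.symm fun hcr => ?_).symm).elim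
        exact G.loopless.irrefl _ (hdom _ (hcr ▸ hac).symm)
  constructor
  · intro hij
    by_cases hi : G.Adj r i <;> by_cases hj : G.Adj r j
    · exact (htri hi hj hij).elim
    · simp [hi, hj]
    · simp [hi, hj]
    · have hsi := (hdom i).resolve_left hi s hrs
      have hsj := (hdom j).resolve_left hj s hrs
      exact (htri hij hsi hsj).elim
  · intro hrij
    by_cases hi : G.Adj r i
    · exact (((hdom j).resolve_left (hrij.mp hi)) i hi).symm
    · exact (hdom i).resolve_left hi j (not_not.mp (mt hrij.mpr hi))

end SimpleGraph

theorem stmt11_general (n : ℕ) (hn : 2 ≤ n) (E : Set (Fin n × Fin n))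
    (hloop : ∀ v : Fin n, (v, v) ∉ E)
    (hconn : (graphOf E).Connected)
    (hclosed : IsClosed (proj E '' psdRank (Fin n) 1)) :
    ∃ V1 V2 : Set (Fin n), V1.Nonempty ∧ V2.Nonempty ∧ (∀ v, v ∈ V1 ↔ v ∉ V2) ∧
      ∀ i j : Fin n, ((i, j) ∈ E ∨ (j, i) ∈ E) ↔
        ((i ∈ V1 ∧ j ∈ V2) ∨ (i ∈ V2 ∧ j ∈ V1)) := by
  have : Nontrivial (Fin n) := Fin.nontrivial_iff_two_le.mpr hn
  let r : Fin n := ⟨0, by omega⟩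
  obtain ⟨s, hrs⟩ := hconn.preconnected.exists_adj_of_nontrivial r
  refine ⟨{v | (graphOf E).Adj r v}, {v | ¬(graphOf E).Adj r v}, ⟨s, hrs⟩,
    ⟨r, (graphOf E).loopless.irrefl r⟩, fun v => not_not.symm, fun i j => ?_⟩
  rw [← graphOf_adj_iff hloop, hconn.preconnected.adj_iff_of_cliqueFree_three
    (graphOf_cliqueFree_three hloop hclosed)
    (fun _ _ _ _ => graphOf_adj_of_adj_of_adj_of_adj hloop hclosed) hrs]
  simp only [Set.mem_ofPred_eq]
  tauto

/-- If `G` is a connected loopless graph on `n ≥ 2` vertices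
and `P(Sⁿ₁₊)` is closed, then `G` is complete bipartite. -/
theorem stmt11 (n : ℕ) (hn : 2 ≤ n) (E : Set (Fin n × Fin n))
    (hup : ∀ p ∈ E, p.1 ≤ p.2)
    (hloop : ∀ v : Fin n, (v, v) ∉ E)
    (hconn : (graphOf E).Connected)
    (hclosed : IsClosed (proj E '' psdRank (Fin n) 1)) :
    ∃ V1 V2 : Set (Fin n), V1.Nonempty ∧ V2.Nonempty ∧ (∀ v, v ∈ V1 ↔ v ∉ V2) ∧
      ∀ i j : Fin n, ((i, j) ∈ E ∨ (j, i) ∈ E) ↔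
        ((i ∈ V1 ∧ j ∈ V2) ∨ (i ∈ V2 ∧ j ∈ V1)) :=
  stmt11_general n hn E hloop hconn hclosed
end
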